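/- arXiv:2208.07894 — 5 statements merged into one kernel-verified Lean document; each statement's English description precedes it below -/
import Mathlib

section
/- Let T be a bounded self-adjoint operator on a Hilbert space with ‖T² - T‖ ≤ c < 1/8. Then the circle {z ∈ ℂ : |z-1| = 1/2} lies in the resolvent set of T, and the operator P = (i/2π) ∮_{|z-1|=1/2} (T - z)^{-1} dz is an orthogonal projection satisfying ‖P - T‖ ≲ c. -/
/-!
By the spectral mapping theorem for the normal operator `T`, every `λ ∈ σ(T)` satisfies
`|λ (λ - 1)| ≤ ‖T² - T‖ ≤ c`. On the circle `|z - 1| = 1/2` one has `|z (z - 1)| ≥ 1/4 > c`,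
so the circle misses the spectrum. Commuting the contour integral with the continuous
functional calculus and applying Cauchy's formula pointwise, the Riesz integral is `χ(T)`,
where `χ` is the indicator of the disc `|z - 1| < 1/2`; since `χ` is real and `χ² = χ`,
this is an orthogonal projection. Finally `|χ(λ) - λ| ≤ 2 |λ (λ - 1)|` for every `λ ∈ ℂ`,
so `‖χ(T) - T‖ ≤ 2c`.
-/

open Metric Complex Real

lemma half_le_norm_of_norm_sub_one_le {x : ℂ} (hx : ‖x - 1‖ ≤ 1 / 2) : 1 / 2 ≤ ‖x‖ := by
  have := norm_sub_norm_le (1 : ℂ) (1 - x)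
  rw [sub_sub_cancel, norm_one, norm_sub_rev] at this
  linarith

lemma quarter_le_norm_mul_sub_one {z : ℂ} (hz : ‖z - 1‖ = 1 / 2) : 1 / 4 ≤ ‖z * (z - 1)‖ := by
  rw [norm_mul, hz]
  linarith [half_le_norm_of_norm_sub_one_le hz.le]

lemma norm_indicator_ball_sub_le (x : ℂ) :
    ‖(ball (1 : ℂ) (1 / 2)).indicator 1 x - x‖ ≤ 2 * ‖x * (x - 1)‖ := by
  rw [norm_mul]
  by_cases hx : x ∈ ball (1 : ℂ) (1 / 2)
  · rw [Set.indicator_of_mem hx, Pi.one_apply, ← norm_neg, neg_sub]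
    rw [mem_ball_iff_norm] at hx
    nlinarith [half_le_norm_of_norm_sub_one_le hx.le, norm_nonneg (x - 1)]
  · rw [Set.indicator_of_notMem hx, zero_sub, norm_neg]
    rw [mem_ball_iff_norm, not_lt] at hx
    nlinarith [norm_nonneg x]

lemma circleIntegral_inv_sub_eq_indicator {c w : ℂ} {R : ℝ} (hR : 0 ≤ R)
    (hw : w ∉ sphere c R) :
    ∮ z in C(c, R), (w - z)⁻¹ = -(2 * π * I) * (ball c R).indicator 1 w := by
  by_cases hwc : w ∈ ball c R
  · have hneg : (fun z ↦ (w - z)⁻¹) = fun z ↦ -1 * (z - w)⁻¹ := by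
      ext z
      rw [← neg_sub, inv_neg, neg_one_mul]
    rw [hneg, circleIntegral.integral_const_mul, circleIntegral.integral_sub_inv_of_mem_ball hwc,
      Set.indicator_of_mem hwc]
    simp
  · have hwc' : w ∉ closedBall c R := fun h ↦
      hw (closedBall_sdiff_ball (x := c) (ε := R) ▸ ⟨h, hwc⟩)
    rw [Set.indicator_of_notMem hwc, mul_zero]
    refine DiffContOnCl.circleIntegral_eq_zero hR (DifferentiableOn.diffContOnCl ?_)
    refine (differentiableOn_const w |>.sub differentiableOn_id).inv fun z hz h ↦ hwc' ?_
    obtain rfl : w = z := sub_eq_zero.mp h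
    exact closure_ball_subset_closedBall hz

lemma continuousOn_indicator_ball {X β : Type*} [PseudoMetricSpace X] [TopologicalSpace β]
    [Zero β] [One β] {c : X} {R : ℝ} {s : Set X} (h : ∀ z ∈ sphere c R, z ∉ s) :
    ContinuousOn ((ball c R).indicator (1 : X → β)) s := fun x hx ↦
  (continuousOn_const.continuousAt_indicator fun hfr ↦ h x (frontier_ball_subset_sphere hfr) hx)
    |>.continuousWithinAt

section FunctionalCalculus

variable {A : Type*} {p : A → Prop} [Ring A] [StarRing A] [Algebra ℂ A] [TopologicalSpace A]
  [ContinuousFunctionalCalculus ℂ A p]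

lemma ringInverse_sub_smul_one_eq_cfc {a : A} {z : ℂ} (hz : z ∉ spectrum ℂ a)
    (ha : p a := by cfc_tac) :
    Ring.inverse (a - z • 1) = cfc (fun x ↦ (x - z)⁻¹) a := by
  rw [cfc_inv (fun x ↦ x - z) a (fun x hx h ↦ hz (sub_eq_zero.mp h ▸ hx)),
    cfc_sub (fun x ↦ x) (fun _ ↦ z) a, cfc_id' ℂ a, cfc_const z a,
    Algebra.algebraMap_eq_smul_one]

lemma isIdempotentElem_cfc_indicator_one {s : Set ℂ} (a : A)
    (hs : ContinuousOn (s.indicator (1 : ℂ → ℂ)) (spectrum ℂ a)) :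
    IsIdempotentElem (cfc (s.indicator (1 : ℂ → ℂ)) a) := by
  rw [IsIdempotentElem, ← cfc_mul ..]
  exact cfc_congr fun x _ ↦ by by_cases hx : x ∈ s <;> simp [hx]

lemma isSelfAdjoint_cfc_indicator_one (s : Set ℂ) (a : A) :
    IsSelfAdjoint (cfc (s.indicator (1 : ℂ → ℂ)) a) := by
  rw [IsSelfAdjoint, ← cfc_star]
  congr with x
  by_cases hx : x ∈ s <;> simp [hx]

end FunctionalCalculus

section CircleIntegral

variable {A : Type*} {p : A → Prop} [NormedRing A] [StarRing A] [NormedAlgebra ℂ A]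
  [CompleteSpace A] [ContinuousFunctionalCalculus ℂ A p]

lemma circleIntegral_cfc (f : ℂ → ℂ → ℂ) (a : A) (c : ℂ) (R : ℝ)
    (hf : ContinuousOn (Function.uncurry f) (sphere c |R| ×ˢ spectrum ℂ a))
    (ha : p a := by cfc_tac) :
    ∮ z in C(c, R), cfc (f z) a = cfc (fun x ↦ ∮ z in C(c, R), f z x) a := by
  set g : ℝ → ℂ → ℂ := fun θ x ↦ deriv (circleMap c R) θ • f (circleMap c R θ) x
  have hg : ContinuousOn (Function.uncurry g) (Set.Ioc 0 (2 * π) ×ˢ spectrum ℂ a) := by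
    have hcirc : Continuous fun q : ℝ × ℂ ↦ (circleMap c R q.1, q.2) := by fun_prop
    have hderiv : Continuous fun q : ℝ × ℂ ↦ deriv (circleMap c R) q.1 := by
      simp only [deriv_circleMap]
      fun_prop
    exact hderiv.continuousOn.smul
      (hf.comp hcirc.continuousOn fun q hq ↦ ⟨circleMap_mem_sphere' c R q.1, hq.2⟩)
  obtain ⟨M, hM⟩ :=
    ((isCompact_sphere c |R|).prod (spectrum.isCompact a)).exists_bound_of_continuousOn hf
  have hbound : ∀ θ, ∀ x ∈ spectrum ℂ a, ‖g θ x‖ ≤ |R| * M := by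
    intro θ x hx
    simp only [g, deriv_circleMap, smul_eq_mul, norm_mul, norm_circleMap_zero, norm_I, mul_one]
    gcongr
    exact hM (circleMap c R θ, x) ⟨circleMap_mem_sphere' c R θ, hx⟩
  have hcont (θ : ℝ) : ContinuousOn (f (circleMap c R θ)) (spectrum ℂ a) :=
    hf.comp (Continuous.prodMk_right (circleMap c R θ)).continuousOn
      fun x hx ↦ ⟨circleMap_mem_sphere' c R θ, hx⟩
  simp only [circleIntegral, intervalIntegral.integral_of_le two_pi_pos.le]
  rw [cfc_setIntegral measurableSet_Ioc g (fun _ ↦ |R| * M) a hg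
    (.of_forall fun θ ↦ hbound θ) (MeasureTheory.hasFiniteIntegral_const _)]
  exact MeasureTheory.setIntegral_congr_fun measurableSet_Ioc fun θ _ ↦
    (cfc_smul _ _ _ (hcont θ)).symm

lemma circleIntegral_ringInverse_sub_smul_one {a : A} {c : ℂ} {R : ℝ}
    (h : ∀ z ∈ sphere c |R|, z ∉ spectrum ℂ a) (ha : p a := by cfc_tac) :
    ∮ z in C(c, R), Ring.inverse (a - z • 1) = cfc (fun x ↦ ∮ z in C(c, R), (x - z)⁻¹) a := by
  rw [← circleIntegral_cfc (fun z x ↦ (x - z)⁻¹) a c R ?_]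
  · refine intervalIntegral.integral_congr fun θ _ ↦ ?_
    dsimp only
    rw [ringInverse_sub_smul_one_eq_cfc (h _ (circleMap_mem_sphere' c R θ))]
  · refine (continuous_snd.sub continuous_fst).continuousOn.inv₀ fun q hq hq' ↦ ?_
    exact h q.1 hq.1 (sub_eq_zero.mp hq' ▸ hq.2)

noncomputable def rieszProjection (a : A) (c : ℂ) (R : ℝ) : A :=
  (I / (2 * π)) • ∮ z in C(c, R), Ring.inverse (a - z • 1)

lemma rieszProjection_eq_cfc_indicator {a : A} {c : ℂ} {R : ℝ} (hR : 0 ≤ R)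
    (h : ∀ z ∈ sphere c R, z ∉ spectrum ℂ a) (ha : p a := by cfc_tac) :
    rieszProjection a c R = cfc ((ball c R).indicator 1) a := by
  have hscalar : (I / (2 * π)) * -(2 * π * I) = 1 := by
    field_simp
    simp
  rw [rieszProjection, circleIntegral_ringInverse_sub_smul_one (by rwa [abs_of_nonneg hR]),
    cfc_congr (g := fun x ↦ -(2 * π * I) * (ball c R).indicator 1 x)
      fun x hx ↦ circleIntegral_inv_sub_eq_indicator hR fun hx' ↦ h x hx' hx,
    cfc_const_mul _ _ _ (continuousOn_indicator_ball h), smul_smul, hscalar, one_smul]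

end CircleIntegral

section CStarAlgebra

variable {A : Type*} [CStarAlgebra A] {a : A} [IsStarNormal a]

lemma norm_mul_sub_one_le_of_mem_spectrum {x : ℂ} (hx : x ∈ spectrum ℂ a) :
    ‖x * (x - 1)‖ ≤ ‖a * a - a‖ := by
  have h : cfc (fun x : ℂ ↦ x * (x - 1)) a = a * a - a := by
    rw [cfc_mul (fun x ↦ x) (fun x ↦ x - 1) a, cfc_sub (fun x ↦ x) (fun _ ↦ 1) a, cfc_id' ℂ a,
      cfc_const_one ℂ a, mul_sub, mul_one]
  exact h ▸ norm_apply_le_norm_cfc (fun x ↦ x * (x - 1)) a hx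

lemma norm_cfc_indicator_ball_sub_le (h : ∀ z ∈ sphere (1 : ℂ) (1 / 2), z ∉ spectrum ℂ a) :
    ‖cfc ((ball (1 : ℂ) (1 / 2)).indicator 1) a - a‖ ≤ 2 * ‖a * a - a‖ := by
  nth_rw 2 [← cfc_id' ℂ a]
  rw [← cfc_sub _ _ a (continuousOn_indicator_ball h)]
  refine norm_cfc_le (by positivity) fun x hx ↦ (norm_indicator_ball_sub_le x).trans ?_
  gcongr
  exact norm_mul_sub_one_le_of_mem_spectrum hx

end CStarAlgebra

/-- Let `T` be a bounded self-adjoint operator on a Hilbert space with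
`‖T² - T‖ ≤ c < 1/8`. Then the circle `{z : |z-1| = 1/2}` lies in the resolvent set
of `T`, and `P = (i/2π) ∮_{|z-1|=1/2} (T - z)⁻¹ dz` is an orthogonal projection
with `‖P - T‖ ≤ C·c` for an absolute constant `C`. -/
theorem almost_projection_riesz :
    ∃ C : ℝ, 0 < C ∧
      ∀ (H : Type) [inst1 : NormedAddCommGroup H] [inst2 : InnerProductSpace ℂ H]
        [inst3 : CompleteSpace H]
        (T : H →L[ℂ] H) (c : ℝ),
        IsSelfAdjoint T → ‖T * T - T‖ ≤ c → c < 1 / 8 →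
        (∀ z : ℂ, ‖z - 1‖ = 1 / 2 → z ∉ spectrum ℂ T) ∧
        (IsIdempotentElem ((Complex.I / (2 * Real.pi)) •
              (∮ z in C(1, 1 / 2), Ring.inverse (T - z • 1))) ∧
          IsSelfAdjoint ((Complex.I / (2 * Real.pi)) •
              (∮ z in C(1, 1 / 2), Ring.inverse (T - z • 1))) ∧
          ‖(Complex.I / (2 * Real.pi)) •
              (∮ z in C(1, 1 / 2), Ring.inverse (T - z • 1)) - T‖ ≤ C * c) := by
  refine ⟨2, two_pos, fun H _ _ _ T c hT hc hc8 ↦ ?_⟩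
  have : IsStarNormal T := hT.isStarNormal
  have hcircle : ∀ z ∈ sphere (1 : ℂ) (1 / 2), z ∉ spectrum ℂ T := fun z hz hzT ↦ by
    linarith [norm_mul_sub_one_le_of_mem_spectrum hzT,
      quarter_le_norm_mul_sub_one (mem_sphere_iff_norm.mp hz)]
  have hP : rieszProjection T 1 (1 / 2) = cfc ((ball (1 : ℂ) (1 / 2)).indicator 1) T :=
    rieszProjection_eq_cfc_indicator (by norm_num) hcircle
  rw [rieszProjection] at hP
  rw [hP]
  exact ⟨fun z hz ↦ hcircle z (mem_sphere_iff_norm.mpr hz),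
    isIdempotentElem_cfc_indicator_one T (continuousOn_indicator_ball hcircle),
    isSelfAdjoint_cfc_indicator_one _ T,
    (norm_cfc_indicator_ball_sub_le hcircle).trans (by linarith)⟩
end

section
/- Let T be a bounded self-adjoint operator with ‖T² - T‖ ≤ c < 1/8. Then the spectrum of T is contained in the union of the two intervals of radius 2c around 0 and around 1; in particular every z with |z-1| = 1/2 satisfies dist(z, σ(T)) ≥ 1/2 - 2c > 0. -/
/-!
Every `μ ∈ σ(T)` satisfies `μ² - μ ∈ σ(T² - T)`, so `|μ| |μ - 1| ≤ ‖T² - T‖ ≤ c`. Since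
`|μ| + |μ - 1| ≥ 1`, the larger of the two factors is at least `1/2`, which forces the smaller
one to be at most `2c`. The distance bound is then the triangle inequality: a point on the
circle `|z - 1| = 1/2` is at distance at least `1/2` from both `0` and `1`.
-/

open Polynomial

theorem spectrum.norm_eval_le_norm_aeval {𝕜 A : Type*} [NormedField 𝕜] [NormedRing A]
    [NormedAlgebra 𝕜 A] [CompleteSpace A] (h1 : ‖(1 : A)‖ ≤ 1) {a : A} {μ : 𝕜}
    (hμ : μ ∈ spectrum 𝕜 a) (p : 𝕜[X]) : ‖p.eval μ‖ ≤ ‖aeval a p‖ :=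
  calc ‖p.eval μ‖ ≤ ‖aeval a p‖ * ‖(1 : A)‖ :=
        spectrum.norm_le_norm_mul_of_mem (spectrum.subset_polynomial_aeval a p ⟨μ, hμ, rfl⟩)
    _ ≤ ‖aeval a p‖ := mul_le_of_le_one_right (norm_nonneg _) h1

theorem norm_le_or_norm_sub_one_le_of_norm_mul_self_sub_le {𝕜 : Type*} [NormedDivisionRing 𝕜]
    {μ : 𝕜} {c : ℝ} (h : ‖μ * μ - μ‖ ≤ c) : ‖μ‖ ≤ 2 * c ∨ ‖μ - 1‖ ≤ 2 * c := by
  have hprod : ‖μ‖ * ‖μ - 1‖ ≤ c := by rwa [← norm_mul, mul_sub_one]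
  have hsum : 1 ≤ ‖μ‖ + ‖μ - 1‖ := by
    simpa using norm_sub_le μ (μ - 1)
  have := norm_nonneg μ
  have := norm_nonneg (μ - 1)
  rcases le_total ‖μ‖ ‖μ - 1‖ with hle | hle
  · left; nlinarith
  · right; nlinarith

theorem spectrum_almost_projection_general
    {H : Type*} [NormedAddCommGroup H] [InnerProductSpace ℂ H] [CompleteSpace H]
    (T : H →L[ℂ] H) (c : ℝ)
    (hc : ‖T * T - T‖ ≤ c) (hc' : c < 1 / 8) :
    (∀ μ ∈ spectrum ℂ T, ‖μ‖ ≤ 2 * c ∨ ‖μ - 1‖ ≤ 2 * c) ∧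
      0 < 1 / 2 - 2 * c ∧
      ∀ z : ℂ, ‖z - 1‖ = 1 / 2 →
        ∀ μ ∈ spectrum ℂ T, 1 / 2 - 2 * c ≤ dist z μ := by
  have hspec : ∀ μ ∈ spectrum ℂ T, ‖μ‖ ≤ 2 * c ∨ ‖μ - 1‖ ≤ 2 * c := fun μ hμ => by
    have := spectrum.norm_eval_le_norm_aeval ContinuousLinearMap.norm_id_le hμ (X * X - X)
    simp only [eval_sub, eval_mul, eval_X, map_sub, map_mul, aeval_X] at this
    exact norm_le_or_norm_sub_one_le_of_norm_mul_self_sub_le (this.trans hc)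
  refine ⟨hspec, by linarith, fun z hz μ hμ => ?_⟩
  have hz1 : dist z 1 = 1 / 2 := by rwa [dist_eq_norm]
  have hz0 : 1 / 2 ≤ dist z 0 := by
    linarith [dist_triangle (1 : ℂ) z 0, dist_comm (1 : ℂ) z, show dist (1 : ℂ) 0 = 1 by simp]
  rcases hspec μ hμ with hμ0 | hμ1
  · rw [← dist_zero_right] at hμ0
    linarith [dist_triangle z μ 0]
  · rw [← dist_eq_norm] at hμ1
    linarith [dist_triangle z μ 1]

/-- Let `T` be a bounded self-adjoint operator with `‖T² - T‖ ≤ c < 1/8`. Then the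
spectrum of `T` is contained in the union of the balls of radius `2c` around `0` and
around `1`; in particular every `z` with `|z-1| = 1/2` satisfies
`dist(z, σ(T)) ≥ 1/2 - 2c > 0`. -/
theorem spectrum_almost_projection
    {H : Type*} [NormedAddCommGroup H] [InnerProductSpace ℂ H] [CompleteSpace H]
    (T : H →L[ℂ] H) (c : ℝ)
    (hT : IsSelfAdjoint T) (hc : ‖T * T - T‖ ≤ c) (hc' : c < 1 / 8) :
    (∀ μ ∈ spectrum ℂ T, ‖μ‖ ≤ 2 * c ∨ ‖μ - 1‖ ≤ 2 * c) ∧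
      0 < 1 / 2 - 2 * c ∧
      ∀ z : ℂ, ‖z - 1‖ = 1 / 2 →
        ∀ μ ∈ spectrum ℂ T, 1 / 2 - 2 * c ≤ dist z μ :=
  spectrum_almost_projection_general T c hc hc'
end

section
/- Let P and Q be orthogonal projections on a Hilbert space with ‖P - Q‖ < 1. Then the Sz-Nagy operator U = (1 - (Q - P)²)^{-1/2} (QP + (1-Q)(1-P)) is unitary and intertwines P and Q, i.e. UP = QU. -/
section RingLemmas
variable {R : Type*} [Ring R] {p q : R} (hp : p * p = p) (hq : q * q = q)

include hp hq in
lemma szNagy_aux_mul_eq :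
    (p * q + (1 - p) * (1 - q)) * (q * p + (1 - q) * (1 - p)) = 1 - (q - p) ^ 2 := by
  have hp2 : ∀ x : R, p * (p * x) = p * x := fun x => by rw [← mul_assoc, hp]
  have hq2 : ∀ x : R, q * (q * x) = q * x := fun x => by rw [← mul_assoc, hq]
  simp only [mul_sub, sub_mul, mul_add, add_mul, mul_one, one_mul, sq, mul_assoc, hp, hq, hp2, hq2]
  abel

include hp in
lemma szNagy_aux_mul_p : (q * p + (1 - q) * (1 - p)) * p = q * p := by
  have hp2 : ∀ x : R, x * p * p = x * p := fun x => by rw [mul_assoc, hp]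
  simp only [mul_sub, sub_mul, mul_add, add_mul, mul_one, one_mul, hp, hp2]
  abel

include hq in
lemma szNagy_aux_q_mul : q * (q * p + (1 - q) * (1 - p)) = q * p := by
  have hq2 : ∀ x : R, q * (q * x) = q * x := fun x => by rw [← mul_assoc, hq]
  simp only [mul_sub, sub_mul, mul_add, add_mul, mul_one, one_mul, hq, hq2, mul_assoc]
  abel

include hp hq in
lemma szNagy_aux_comm_q : q * (1 - (q - p) ^ 2) = (1 - (q - p) ^ 2) * q := by
  have hp2 : ∀ x : R, p * (p * x) = p * x := fun x => by rw [← mul_assoc, hp]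
  have hq2 : ∀ x : R, q * (q * x) = q * x := fun x => by rw [← mul_assoc, hq]
  simp only [mul_sub, sub_mul, mul_add, add_mul, mul_one, one_mul, sq, mul_assoc, hp, hq, hp2, hq2]
  abel

end RingLemmas

lemma szNagy_commute_cfc_real {H : Type*} [NormedAddCommGroup H] [InnerProductSpace ℂ H]
    [CompleteSpace H] (a b : H →L[ℂ] H) (ha : IsSelfAdjoint a)
    (hab : b * a = a * b) (f : ℝ → ℝ) : b * cfc f a = cfc f a * b := by
  by_cases hf : ContinuousOn f (spectrum ℝ a)
  · rw [cfc_apply f a ha hf]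
    have hφcont : Continuous (cfcHom (R := ℝ) ha) := (cfcHom_isClosedEmbedding ha).continuous
    suffices hall : ∀ g : C(spectrum ℝ a, ℝ),
        b * cfcHom (R := ℝ) ha g = cfcHom (R := ℝ) ha g * b from hall _
    intro g
    have hgmem : g ∈ closure (polynomialFunctions (spectrum ℝ a) : Set C(spectrum ℝ a, ℝ)) := by
      have h1 := polynomialFunctions.topologicalClosure (spectrum ℝ a)
      have h2 : g ∈ (polynomialFunctions (spectrum ℝ a)).topologicalClosure := by
        rw [h1]; trivial
      exact h2
    have himg : cfcHom (R := ℝ) ha g ∈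
        closure (cfcHom (R := ℝ) ha '' (polynomialFunctions (spectrum ℝ a) : Set _)) :=
      (image_closure_subset_closure_image hφcont) ⟨g, hgmem, rfl⟩
    have hsub : cfcHom (R := ℝ) ha '' (polynomialFunctions (spectrum ℝ a) : Set _) ⊆
        {x : H →L[ℂ] H | b * x = x * b} := by
      rintro _ ⟨p, hp, rfl⟩
      rw [SetLike.mem_coe, polynomialFunctions.eq_adjoin_X] at hp
      induction hp using Algebra.adjoin_induction with
      | mem x hx =>
        rcases hx with rfl
        have hid : (Polynomial.toContinuousMapOnAlgHom (spectrum ℝ a)) Polynomial.X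
            = ContinuousMap.restrict (spectrum ℝ a) (ContinuousMap.id ℝ) := by
          ext x; simp [Polynomial.toContinuousMapOn, Polynomial.toContinuousMap]
        show b * _ = _ * b
        rw [hid, cfcHom_id ha, hab]
      | algebraMap r =>
        show b * _ = _ * b
        rw [AlgHomClass.commutes, Algebra.algebraMap_eq_smul_one, mul_smul_comm,
          smul_mul_assoc, mul_one, one_mul]
      | add x y hx hy hx' hy' =>
        show b * _ = _ * b
        rw [map_add, mul_add, add_mul, hx', hy']
      | mul x y hx hy hx' hy' =>
        show b * _ = _ * b
        rw [map_mul, ← mul_assoc, hx', mul_assoc, hy', mul_assoc]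
    have hclosed : IsClosed {x : H →L[ℂ] H | b * x = x * b} :=
      isClosed_eq (continuous_mul_left b) (continuous_mul_right b)
    exact hclosed.closure_subset_iff.mpr hsub himg
  · rw [cfc_apply_of_not_continuousOn a hf, mul_zero, zero_mul]

/-- The Sz-Nagy transformation `U = (1 - (Q-P)²)^{-1/2} (QP + (1-Q)(1-P))`, where the
inverse square root is defined via the continuous functional calculus. -/
noncomputable def szNagy {H : Type*} [NormedAddCommGroup H] [InnerProductSpace ℂ H]
    [CompleteSpace H] (P Q : H →L[ℂ] H) : H →L[ℂ] H :=
  cfc (fun t : ℝ => (Real.sqrt t)⁻¹) (1 - (Q - P) ^ 2) *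
    (Q * P + (1 - Q) * (1 - P))

/-- Let `P`, `Q` be orthogonal projections on a Hilbert space with `‖P - Q‖ < 1`. Then
the Sz-Nagy operator `U = (1 - (Q-P)²)^{-1/2}(QP + (1-Q)(1-P))` is unitary and
intertwines `P` and `Q`, i.e. `UP = QU`. -/
theorem szNagy_unitary_intertwines
    {H : Type*} [NormedAddCommGroup H] [InnerProductSpace ℂ H] [CompleteSpace H]
    (P Q : H →L[ℂ] H)
    (hP : IsIdempotentElem P) (hP' : IsSelfAdjoint P)
    (hQ : IsIdempotentElem Q) (hQ' : IsSelfAdjoint Q)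
    (hPQ : ‖P - Q‖ < 1) :
    szNagy P Q ∈ unitary (H →L[ℂ] H) ∧ szNagy P Q * P = Q * szNagy P Q := by
  rcases subsingleton_or_nontrivial H with hH | hH
  · refine ⟨Unitary.mem_iff.mpr ⟨Subsingleton.elim _ _, Subsingleton.elim _ _⟩,
      Subsingleton.elim _ _⟩
  set f : ℝ → ℝ := fun t => (Real.sqrt t)⁻¹ with hf
  set A : H →L[ℂ] H := 1 - (Q - P) ^ 2 with hA
  set T : H →L[ℂ] H := Q * P + (1 - Q) * (1 - P) with hT
  have hp : P * P = P := hP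
  have hq : Q * Q = Q := hQ
  have hAsa : IsSelfAdjoint A := by
    have : IsSelfAdjoint (Q - P) := hQ'.sub hP'
    exact (IsSelfAdjoint.one _).sub (this.pow 2)
  -- spectrum of A is contained in (0, ∞)
  have hspec : spectrum ℝ A ⊆ Set.Ioi 0 := by
    intro t ht
    have hA' : A = algebraMap ℝ (H →L[ℂ] H) 1 - (Q - P) ^ 2 := by rw [map_one]
    rw [hA', ← spectrum.singleton_sub_eq] at ht
    rw [Set.mem_sub] at ht
    obtain ⟨r, hr, s, hs, hrs⟩ := ht
    rw [Set.mem_singleton_iff] at hr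
    subst hr
    have hsle : ‖s‖ ≤ ‖(Q - P) ^ 2‖ := spectrum.norm_le_norm_of_mem hs
    have hlt : ‖(Q - P) ^ 2‖ < 1 := by
      have h1 : ‖Q - P‖ < 1 := by rwa [norm_sub_rev] at hPQ
      calc ‖(Q - P) ^ 2‖ ≤ ‖Q - P‖ * ‖Q - P‖ := by rw [sq]; exact norm_mul_le _ _
        _ < 1 := by nlinarith [norm_nonneg (Q - P)]
    rw [Real.norm_eq_abs, abs_le] at hsle
    have : s < 1 := lt_of_le_of_lt hsle.2 hlt
    simpa [← hrs] using this
  have hcont : ContinuousOn f (spectrum ℝ A) := by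
    apply ContinuousOn.mono (s := Set.Ioi (0 : ℝ)) _ hspec
    exact ContinuousOn.inv₀ Real.continuous_sqrt.continuousOn
      (fun t ht => Real.sqrt_ne_zero'.mpr ht)
  set R : H →L[ℂ] H := cfc f A with hR
  have hRsa : IsSelfAdjoint R := cfc_predicate f A
  -- A is a unit
  have hAunit : IsUnit A := by
    rw [← spectrum.zero_notMem_iff ℝ]
    exact fun h => lt_irrefl (0 : ℝ) (hspec h)
  -- R * R * A = 1
  have hR2 : R * R = cfc (fun t : ℝ => t⁻¹) A := by
    rw [hR, ← cfc_mul f f A hcont hcont]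
    exact cfc_congr (fun t ht => by
      have h0 : 0 < t := hspec ht
      simp only [hf]
      rw [← mul_inv]
      rw [Real.mul_self_sqrt h0.le])
  have hR2A : R * R * A = 1 := by
    rw [hR2]
    have := cfc_inv_id (R := ℝ) hAunit.unit (by rwa [IsUnit.unit_spec])
    rw [IsUnit.unit_spec] at this
    rw [this]
    have : (↑hAunit.unit⁻¹ : H →L[ℂ] H) * ↑hAunit.unit = 1 := hAunit.unit.inv_mul
    rwa [IsUnit.unit_spec] at this
  -- star T
  have hstarT : star T = P * Q + (1 - P) * (1 - Q) := by
    simp [hT, star_sub, star_mul, hP'.star_eq, hQ'.star_eq]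
  -- algebraic identities
  have hstarTT : star T * T = A := by rw [hstarT, hT, hA]; exact szNagy_aux_mul_eq hp hq
  have hTstarT : T * star T = A := by
    rw [hstarT, hT, hA, szNagy_aux_mul_eq hq hp, ← neg_sub Q P, neg_sq]
  -- commutation of A with Q, T, star T
  have hQA : Q * A = A * Q := by rw [hA]; exact szNagy_aux_comm_q hp hq
  have hTA : T * A = A * T := by
    calc T * A = T * (star T * T) := by rw [hstarTT]
      _ = (T * star T) * T := by rw [mul_assoc]
      _ = A * T := by rw [hTstarT]
  have hstarTA : star T * A = A * star T := by
    calc star T * A = star T * (T * star T) := by rw [hTstarT]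
      _ = (star T * T) * star T := by rw [mul_assoc]
      _ = A * star T := by rw [hstarTT]
  -- commutation with R
  have hQR : Q * R = R * Q := szNagy_commute_cfc_real A Q hAsa hQA f
  have hstarTR : star T * R = R * star T := szNagy_commute_cfc_real A (star T) hAsa hstarTA f
  have hAR : A * R = R * A := szNagy_commute_cfc_real A A hAsa rfl f
  have hU : szNagy P Q = R * T := by rw [hR, hA, hT]; rfl
  have hsU : star (szNagy P Q) = star T * R := by rw [hU, star_mul, hRsa.star_eq]
  constructor
  · rw [Unitary.mem_iff]
    constructor
    · rw [hsU, hU]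
      calc star T * R * (R * T)
          = star T * R * R * T := by rw [mul_assoc (star T * R)]
        _ = R * star T * R * T := by rw [hstarTR]
        _ = R * (star T * R) * T := by rw [mul_assoc R (star T) R]
        _ = R * (R * star T) * T := by rw [hstarTR]
        _ = R * R * star T * T := by rw [mul_assoc R R (star T)]
        _ = R * R * (star T * T) := by rw [mul_assoc (R * R)]
        _ = R * R * A := by rw [hstarTT]
        _ = 1 := hR2A
    · rw [hsU, hU]
      calc R * T * (star T * R)
          = R * (T * (star T * R)) := by rw [mul_assoc R T]
        _ = R * ((T * star T) * R) := by rw [mul_assoc T (star T) R]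
        _ = R * (A * R) := by rw [hTstarT]
        _ = R * (R * A) := by rw [hAR]
        _ = R * R * A := by rw [mul_assoc R R A]
        _ = 1 := hR2A
  · rw [hU]
    have h3 : T * P = Q * P := by rw [hT]; exact szNagy_aux_mul_p hp
    have h4 : Q * T = Q * P := by rw [hT]; exact szNagy_aux_q_mul hq
    calc R * T * P = R * (T * P) := by rw [mul_assoc]
      _ = R * (Q * P) := by rw [h3]
      _ = R * (Q * T) := by rw [h4]
      _ = (R * Q) * T := by rw [mul_assoc]
      _ = (Q * R) * T := by rw [hQR]
      _ = Q * (R * T) := by rw [mul_assoc]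
end

section
/- Let P, Q be orthogonal projections with ‖P - Q‖ ≤ δ < 1 and let U = (1-(Q-P)²)^{-1/2}(QP + (1-Q)(1-P)) be the Sz-Nagy transformation. Then ‖1 - U‖ ≤ C δ for a constant C depending only on δ₀ whenever δ ≤ δ₀ < 1. -/
open Set

lemma inv_sqrt_one_sub_sq_sub_one_le {δ : ℝ} (hδ : 0 ≤ δ) (hδ1 : δ < 1) :
    (√(1 - δ ^ 2))⁻¹ - 1 ≤ δ * (√(1 - δ ^ 2))⁻¹ := by
  have hs : 0 < √(1 - δ ^ 2) := Real.sqrt_pos.mpr (by nlinarith)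
  have hδs : 1 - δ ≤ √(1 - δ ^ 2) := Real.le_sqrt_of_sq_le (by nlinarith)
  have key : (1 - δ) * (√(1 - δ ^ 2))⁻¹ ≤ 1 := by
    rwa [← div_eq_mul_inv, div_le_one hs]
  linarith

lemma IsIdempotentElem.mul_add_one_sub_mul_one_sub {R : Type*} [Ring R] {q : R}
    (hq : IsIdempotentElem q) (p : R) :
    q * p + (1 - q) * (1 - p) = 1 + (2 * q - 1) * (p - q) := by
  simp only [two_mul, add_mul, sub_mul, mul_sub, one_mul, mul_one, hq.eq]
  abel

section CStarAlgebra

variable {A : Type*} [CStarAlgebra A]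

lemma IsStarProjection.norm_two_mul_sub_one_le {q : A} (hq : IsStarProjection q) :
    ‖2 * q - 1‖ ≤ 1 := by
  by_cases! nontriv : Nontrivial A
  · exact (CStarRing.norm_of_mem_unitary hq.two_mul_sub_one_mem_unitary).le
  · simp [Subsingleton.elim (2 * q - 1) 0]

lemma IsStarProjection.norm_mul_add_one_sub_mul_one_sub_sub_one_le {q : A}
    (hq : IsStarProjection q) (p : A) :
    ‖q * p + (1 - q) * (1 - p) - 1‖ ≤ ‖p - q‖ := by
  rw [hq.isIdempotentElem.mul_add_one_sub_mul_one_sub, add_sub_cancel_left]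
  calc ‖(2 * q - 1) * (p - q)‖ ≤ ‖2 * q - 1‖ * ‖p - q‖ := norm_mul_le _ _
    _ ≤ ‖p - q‖ := mul_le_of_le_one_left (norm_nonneg _) hq.norm_two_mul_sub_one_le

lemma IsSelfAdjoint.spectrum_one_sub_sq_subset {d : A} (hd : IsSelfAdjoint d) :
    spectrum ℝ (1 - d ^ 2) ⊆ Icc (1 - ‖d‖ ^ 2) 1 := by
  by_cases! nontriv : Nontrivial A
  · have : 1 - d ^ 2 = cfc (fun t : ℝ => 1 - t ^ 2) d := by
      rw [cfc_sub .., cfc_pow_id d 2, cfc_const_one ℝ d]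
    rw [this, cfc_map_spectrum ..]
    rintro _ ⟨t, ht, rfl⟩
    have : |t| ≤ ‖d‖ := spectrum.norm_le_norm_of_mem ht
    constructor <;> nlinarith [sq_abs t, abs_nonneg t]
  · simp [spectrum.of_subsingleton]

variable {a : A} {m : ℝ}

lemma norm_cfc_inv_sqrt_le (hm : 0 < m) (ha : spectrum ℝ a ⊆ Ici m) :
    ‖cfc (fun t : ℝ => (√t)⁻¹) a‖ ≤ (√m)⁻¹ := by
  refine norm_cfc_le (by positivity) fun x hx => ?_
  rw [Real.norm_of_nonneg (by positivity)]
  exact inv_anti₀ (by positivity) (Real.sqrt_le_sqrt (ha hx))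

lemma norm_one_sub_cfc_inv_sqrt_le (ha : IsSelfAdjoint a) (hm : 0 < m) (hm₁ : m ≤ 1)
    (hspec : spectrum ℝ a ⊆ Icc m 1) :
    ‖1 - cfc (fun t : ℝ => (√t)⁻¹) a‖ ≤ (√m)⁻¹ - 1 := by
  have hcont : ContinuousOn (fun t : ℝ => (√t)⁻¹) (spectrum ℝ a) :=
    Real.continuous_sqrt.continuousOn.inv₀ fun x hx =>
      (Real.sqrt_pos.mpr (hm.trans_le (hspec hx).1)).ne'
  have hc : 1 ≤ (√m)⁻¹ :=
    (one_le_inv₀ (Real.sqrt_pos.mpr hm)).mpr (Real.sqrt_le_one.mpr hm₁)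
  rw [← cfc_const_one ℝ a, ← cfc_sub _ _ a continuousOn_const hcont]
  refine norm_cfc_le (by linarith) fun x hx => ?_
  obtain ⟨hmx, hx1⟩ := hspec hx
  have hsx : 0 < √x := Real.sqrt_pos.mpr (hm.trans_le hmx)
  have : 1 ≤ (√x)⁻¹ := (one_le_inv₀ hsx).mpr (Real.sqrt_le_one.mpr hx1)
  rw [Real.norm_eq_abs, abs_sub_comm, abs_of_nonneg (by linarith)]
  gcongr

lemma norm_one_sub_cfc_inv_sqrt_mul_le {p q : A} (hp : IsSelfAdjoint p)
    (hq : IsStarProjection q) (hpq : ‖p - q‖ < 1) :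
    ‖1 - cfc (fun t : ℝ => (√t)⁻¹) (1 - (q - p) ^ 2) * (q * p + (1 - q) * (1 - p))‖ ≤
      2 * ‖p - q‖ * (√(1 - ‖p - q‖ ^ 2))⁻¹ := by
  set δ := ‖p - q‖
  set c := (√(1 - δ ^ 2))⁻¹
  set f := cfc (fun t : ℝ => (√t)⁻¹) (1 - (q - p) ^ 2)
  set w := q * p + (1 - q) * (1 - p)
  have hm : 0 < 1 - δ ^ 2 := by nlinarith [norm_nonneg (p - q)]
  have hspec : spectrum ℝ (1 - (q - p) ^ 2) ⊆ Icc (1 - δ ^ 2) 1 := by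
    simpa only [norm_sub_rev q p] using (hq.isSelfAdjoint.sub hp).spectrum_one_sub_sq_subset
  have hf : ‖f‖ ≤ c := norm_cfc_inv_sqrt_le hm fun x hx => (hspec hx).1
  have hA : IsSelfAdjoint (1 - (q - p) ^ 2) := .sub (.one A) ((hq.isSelfAdjoint.sub hp).pow 2)
  have hf1 : ‖1 - f‖ ≤ c - 1 := norm_one_sub_cfc_inv_sqrt_le hA hm (by nlinarith) hspec
  have hw : ‖w - 1‖ ≤ δ := hq.norm_mul_add_one_sub_mul_one_sub_sub_one_le p
  calc ‖1 - f * w‖ = ‖(1 - f) - f * (w - 1)‖ := by noncomm_ring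
    _ ≤ ‖1 - f‖ + ‖f‖ * ‖w - 1‖ := (norm_sub_le _ _).trans (by gcongr; exact norm_mul_le _ _)
    _ ≤ (c - 1) + c * δ := by gcongr
    _ ≤ 2 * δ * c := by
      have := inv_sqrt_one_sub_sq_sub_one_le (norm_nonneg (p - q)) hpq
      linarith

end CStarAlgebra

/-- Let `P, Q` be orthogonal projections with `‖P - Q‖ ≤ δ ≤ δ₀ < 1`, and let `U` be the
Sz-Nagy transformation. Then `‖1 - U‖ ≤ C δ` for a constant `C` depending only on `δ₀`. -/
theorem szNagy_close_to_identity (δ₀ : ℝ) (hδ₀ : 0 ≤ δ₀) (hδ₀' : δ₀ < 1) :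
    ∃ C : ℝ, 0 < C ∧
      ∀ (H : Type) [inst1 : NormedAddCommGroup H] [inst2 : InnerProductSpace ℂ H]
        [inst3 : CompleteSpace H]
        (P Q : H →L[ℂ] H) (δ : ℝ),
        IsIdempotentElem P → IsSelfAdjoint P →
        IsIdempotentElem Q → IsSelfAdjoint Q →
        ‖P - Q‖ ≤ δ → δ ≤ δ₀ →
        ‖1 - szNagy P Q‖ ≤ C * δ := by
  have hs₀ : 0 < √(1 - δ₀ ^ 2) := Real.sqrt_pos.mpr (by nlinarith)
  refine ⟨2 * (√(1 - δ₀ ^ 2))⁻¹, by positivity, ?_⟩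
  intro H _ _ _ P Q δ _ hPsa hQ hQsa hPQ hδ
  calc ‖1 - szNagy P Q‖ ≤ 2 * ‖P - Q‖ * (√(1 - ‖P - Q‖ ^ 2))⁻¹ :=
        norm_one_sub_cfc_inv_sqrt_mul_le hPsa ⟨hQ, hQsa⟩ (hPQ.trans_lt (hδ.trans_lt hδ₀'))
    _ ≤ 2 * (√(1 - δ₀ ^ 2))⁻¹ * δ := by
      rw [mul_right_comm]
      gcongr
      exact hPQ.trans hδ
end

section
/- Let H^ε be self-adjoint and P a projection with ‖[H^ε, P]‖ ≤ C ε^{β(N+1)}. Decompose H^ε_N = P H^ε P + (1-P)H^ε(1-P). Then for all t, ‖(1-P) e^{-itε^{-2β}H^ε} P‖ ≤ C' |t| ε^{β(N-1)}. -/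
/-!
Write `q = 1 - p` and `U s = exp (s • b)` with `b` skew-adjoint. In the interaction picture
`G s = exp (-s • q b q) * (q * U s * p)` (`q b q` plays the role of `H_N`, since `H_N q = q H q`)
the diagonal part cancels: `G' s = exp (-s • q b q) * (q b p) * (U s * p)`. Exponentials of
skew-adjoint elements are unitary and `‖p‖ ≤ 1`, so `‖G'‖ ≤ ‖q b p‖`, and since `G 0 = q p = 0`
the mean value inequality gives `‖q U t p‖ = ‖G t‖ ≤ |t| ‖q b p‖`. Finally
`q a p = q [a, p]`, and the time scale `ε^{-2β}` turns `ε^{β(N+1)}` into `ε^{β(N-1)}`.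
-/

open NormedSpace

theorem IsStarProjection.norm_compl_mul_mul_le_norm_commutator {E : Type*} [NormedRing E]
    [StarRing E] [CStarRing E] {p : E} (hp : IsStarProjection p) (a : E) :
    ‖(1 - p) * a * p‖ ≤ ‖a * p - p * a‖ := by
  have hqp : (1 - p) * p = 0 := by rw [sub_mul, one_mul, hp.isIdempotentElem.eq, sub_self]
  calc ‖(1 - p) * a * p‖ = ‖(1 - p) * (a * p - p * a)‖ := by
        rw [mul_sub, ← mul_assoc (1 - p) p, hqp, zero_mul, sub_zero, mul_assoc]
    _ ≤ ‖1 - p‖ * ‖a * p - p * a‖ := norm_mul_le _ _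
    _ ≤ ‖a * p - p * a‖ := mul_le_of_le_one_left (norm_nonneg _) (hp.one_sub.norm_le _)

theorem hasDerivAt_exp_mul_compl_mul_exp_mul {E : Type*} [NormedRing E] [NormedAlgebra ℝ E]
    [CompleteSpace E] {p : E} (hp : IsIdempotentElem p) (b : E) (s : ℝ) :
    HasDerivAt
      (fun s : ℝ ↦ exp (s • -((1 - p) * b * (1 - p))) * ((1 - p) * exp (s • b) * p))
      (exp (s • -((1 - p) * b * (1 - p))) * ((1 - p) * b * p * (exp (s • b) * p))) s := by
  refine ((hasDerivAt_exp_smul_const (-((1 - p) * b * (1 - p))) s).mul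
    (((hasDerivAt_exp_smul_const' b s).const_mul (1 - p)).mul_const p)).congr_deriv ?_
  set V := exp (s • -((1 - p) * b * (1 - p)))
  set U := exp (s • b)
  have hq : (1 - p) * (1 - p) = 1 - p := hp.one_sub.eq
  calc _ = V * ((1 - p) * b * (1 - (1 - p) * (1 - p)) * U * p) := by noncomm_ring
    _ = _ := by rw [hq, sub_sub_cancel]; noncomm_ring

section RealCStarRing

variable {E : Type*} [NormedRing E] [StarRing E] [CStarRing E] [NormedAlgebra ℝ E]
  [CompleteSpace E] [StarModule ℝ E]

theorem exp_smul_mem_unitary_of_mem_skewAdjoint {b : E} (hb : b ∈ skewAdjoint E) (s : ℝ) :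
    exp (s • b) ∈ unitary E :=
  letI : NormedAlgebra ℚ E := .restrictScalars ℚ ℝ E
  exp_mem_unitary_of_mem_skewAdjoint (skewAdjoint.smul_mem s hb)

theorem IsStarProjection.norm_compl_mul_exp_smul_mul_le {p b : E} (hp : IsStarProjection p)
    (hb : b ∈ skewAdjoint E) (t : ℝ) :
    ‖(1 - p) * exp (t • b) * p‖ ≤ ‖(1 - p) * b * p‖ * |t| := by
  set q : E := 1 - p
  have hqbq : -(q * b * q) ∈ skewAdjoint E := by
    have := skewAdjoint.conjugate' hb q
    rw [hp.one_sub.isSelfAdjoint.star_eq] at this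
    exact neg_mem this
  have hderiv_le (s : ℝ) :
      ‖exp (s • -(q * b * q)) * (q * b * p * (exp (s • b) * p))‖ ≤ ‖q * b * p‖ := by
    rw [CStarRing.norm_mem_unitary_mul _ (exp_smul_mem_unitary_of_mem_skewAdjoint hqbq s)]
    refine (norm_mul_le _ _).trans (mul_le_of_le_one_right (norm_nonneg _) ?_)
    rw [CStarRing.norm_mem_unitary_mul _ (exp_smul_mem_unitary_of_mem_skewAdjoint hb s)]
    exact hp.norm_le _
  have hmvt := convex_univ.norm_image_sub_le_of_norm_hasDerivWithin_le
    (fun s _ ↦ (hasDerivAt_exp_mul_compl_mul_exp_mul hp.isIdempotentElem b s).hasDerivWithinAt)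
    (fun s _ ↦ hderiv_le s) (Set.mem_univ 0) (Set.mem_univ t)
  have hqp : q * p = 0 := by simp [q, sub_mul, hp.isIdempotentElem.eq]
  rwa [zero_smul, exp_zero, zero_smul, exp_zero, one_mul, mul_one, hqp, sub_zero, sub_zero,
    Real.norm_eq_abs, CStarRing.norm_mem_unitary_mul _
      (exp_smul_mem_unitary_of_mem_skewAdjoint hqbq t)] at hmvt

end RealCStarRing

theorem IsStarProjection.norm_compl_mul_exp_mul_le_norm_commutator {E : Type*} [CStarAlgebra E]
    {a p : E} (ha : IsSelfAdjoint a) (hp : IsStarProjection p) (t : ℝ) :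
    ‖(1 - p) * exp ((-Complex.I * t) • a) * p‖ ≤ |t| * ‖a * p - p * a‖ := by
  have hb : -Complex.I • a ∈ skewAdjoint E :=
    ha.smul_mem_skewAdjoint (neg_mem Complex.conj_I)
  have hnorm : ‖(1 - p) * (-Complex.I • a) * p‖ = ‖(1 - p) * a * p‖ := by
    rw [mul_smul_comm, smul_mul_assoc, norm_smul, norm_neg, Complex.norm_I, one_mul]
  calc ‖(1 - p) * exp ((-Complex.I * t) • a) * p‖
      = ‖(1 - p) * exp (t • -Complex.I • a) * p‖ := by rw [mul_comm, mul_smul, Complex.coe_smul]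
    _ ≤ ‖(1 - p) * a * p‖ * |t| := hnorm ▸ hp.norm_compl_mul_exp_smul_mul_le hb t
    _ ≤ |t| * ‖a * p - p * a‖ := by
        rw [mul_comm]; gcongr; exact hp.norm_compl_mul_mul_le_norm_commutator a

theorem almost_invariant_subspace_dynamics_general
    (β C : ℝ) (N : ℕ) :
    ∃ C' : ℝ, 0 < C' ∧
      ∀ (Hsp : Type) [inst1 : NormedAddCommGroup Hsp] [inst2 : InnerProductSpace ℂ Hsp]
        [inst3 : CompleteSpace Hsp]
        (A P : Hsp →L[ℂ] Hsp) (ε : ℝ), 0 < ε → ε ≤ 1 →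
        IsSelfAdjoint A → IsIdempotentElem P → IsSelfAdjoint P →
        ‖A * P - P * A‖ ≤ C * ε ^ (β * (N + 1)) →
        ∀ t : ℝ,
          ‖(1 - P) *
              NormedSpace.exp ((-Complex.I * (t : ℂ) * ((ε ^ (-(2 * β)) : ℝ) : ℂ)) • A) *
              P‖ ≤ C' * |t| * ε ^ (β * ((N : ℝ) - 1)) := by
  refine ⟨max C 1, by positivity, fun Hsp _ _ _ A P ε hε _ hA hP hPsa hcomm t ↦ ?_⟩
  have hκ : 0 < ε ^ (-(2 * β)) := Real.rpow_pos_of_pos hε _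
  have hscale : ε ^ (-(2 * β)) * ε ^ (β * ((N : ℝ) + 1)) = ε ^ (β * ((N : ℝ) - 1)) := by
    rw [← Real.rpow_add hε]; ring_nf
  calc _ = ‖(1 - P) * NormedSpace.exp ((-Complex.I * ↑(t * ε ^ (-(2 * β)))) • A) * P‖ := by
        push_cast; ring_nf
    _ ≤ |t * ε ^ (-(2 * β))| * ‖A * P - P * A‖ :=
        IsStarProjection.norm_compl_mul_exp_mul_le_norm_commutator hA ⟨hP, hPsa⟩ _
    _ ≤ |t| * ε ^ (-(2 * β)) * (C * ε ^ (β * (N + 1))) := by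
        rw [abs_mul, abs_of_pos hκ]; gcongr
    _ = C * |t| * ε ^ (β * ((N : ℝ) - 1)) := by rw [← hscale]; ring
    _ ≤ max C 1 * |t| * ε ^ (β * ((N : ℝ) - 1)) := by gcongr; exact le_max_left C 1

/-- Let `H^ε` be self-adjoint and `P` an orthogonal projection with
`‖[H^ε, P]‖ ≤ C ε^{β(N+1)}`. Then for all `t`,
`‖(1-P) e^{-itε^{-2β}H^ε} P‖ ≤ C' |t| ε^{β(N-1)}`. -/
theorem almost_invariant_subspace_dynamics
    (β C : ℝ) (N : ℕ) (hβ : 0 < β) (hC : 0 ≤ C) (hN : 1 ≤ N) :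
    ∃ C' : ℝ, 0 < C' ∧
      ∀ (Hsp : Type) [inst1 : NormedAddCommGroup Hsp] [inst2 : InnerProductSpace ℂ Hsp]
        [inst3 : CompleteSpace Hsp]
        (A P : Hsp →L[ℂ] Hsp) (ε : ℝ), 0 < ε → ε ≤ 1 →
        IsSelfAdjoint A → IsIdempotentElem P → IsSelfAdjoint P →
        ‖A * P - P * A‖ ≤ C * ε ^ (β * (N + 1)) →
        ∀ t : ℝ,
          ‖(1 - P) *
              NormedSpace.exp ((-Complex.I * (t : ℂ) * ((ε ^ (-(2 * β)) : ℝ) : ℂ)) • A) *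
              P‖ ≤ C' * |t| * ε ^ (β * ((N : ℝ) - 1)) :=
  almost_invariant_subspace_dynamics_general β C N
end
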